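/- arXiv:2309.17159 — 4 statements merged into one kernel-verified Lean document; each statement's English description precedes it below -/
import Mathlib

section
/- Let p > 0, let c ∈ ℝ² with c ≠ 0, and let R = |c|, so that the circle of center c and radius R passes through the origin. Then the generalized curvature with respect to the density |x|^p is constant on this circle: for every x with |x − c| = R and x ≠ 0, one has 1/R − (p/(R·|x|²))·⟨x, c − x⟩ = (2 + p)/(2R). -/
open scoped RealInnerProductSpace

/-- In ℝ² with density |x|^p, a circle through the origin (center c ≠ 0, radius
    R = |c|) has constant generalized curvature (2+p)/(2R). -/
theorem gen_curvature_constant_of_circle_through_origin (p : ℝ) (hp : 0 < p)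
    (c : EuclideanSpace ℝ (Fin 2)) (hc : c ≠ 0) (R : ℝ) (hR : R = ‖c‖) :
    ∀ x : EuclideanSpace ℝ (Fin 2), ‖x - c‖ = R → x ≠ 0 →
      1 / R - (p / (R * ‖x‖ ^ 2)) * ⟪x, c - x⟫ = (2 + p) / (2 * R) := by
  intro x hxc hx0
  have hR0 : R ≠ 0 := by
    rw [hR]; exact norm_ne_zero_iff.mpr hc
  have hx : ‖x‖ ≠ 0 := norm_ne_zero_iff.mpr hx0
  have hsq : ‖x - c‖ ^ 2 = ‖c‖ ^ 2 := by rw [hxc, hR]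
  have hexp : ‖x - c‖ ^ 2 = ‖x‖ ^ 2 - 2 * ⟪x, c⟫ + ‖c‖ ^ 2 := by
    rw [@norm_sub_sq_real]
  have hinner : ⟪x, c⟫ = ‖x‖ ^ 2 / 2 := by nlinarith [hexp, hsq]
  have h2 : ⟪x, c - x⟫ = -(‖x‖ ^ 2) / 2 := by
    rw [inner_sub_right, hinner, real_inner_self_eq_norm_sq]; ring
  rw [h2]
  field_simp
  ring
end

section
/- Let p > 0, let c ∈ ℝ² with c ≠ 0, and let R > 0 with R ≠ |c| (so the circle of center c and radius R is not centered at the origin and does not pass through the origin). Then the generalized curvature with respect to the density |x|^p is not constant on this circle: there exist points x, y with |x − c| = |y − c| = R such that 1/R − (p/(R·|x|²))·⟨x, c − x⟩ ≠ 1/R − (p/(R·|y|²))·⟨y, c − y⟩. -/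
open scoped RealInnerProductSpace

/-- In ℝ² with density |x|^p, a circle not centered at the origin and not passing
    through the origin does not have constant generalized curvature. -/
theorem gen_curvature_not_constant_of_circle_not_through_origin (p : ℝ) (hp : 0 < p)
    (c : EuclideanSpace ℝ (Fin 2)) (hc : c ≠ 0) (R : ℝ) (hRpos : 0 < R)
    (hR : R ≠ ‖c‖) :
    ∃ x y : EuclideanSpace ℝ (Fin 2), ‖x - c‖ = R ∧ ‖y - c‖ = R ∧
      1 / R - (p / (R * ‖x‖ ^ 2)) * ⟪x, c - x⟫ ≠
        1 / R - (p / (R * ‖y‖ ^ 2)) * ⟪y, c - y⟫ := by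
  set a := ‖c‖ with ha
  have ha0 : 0 < a := norm_pos_iff.mpr hc
  have haR : a - R ≠ 0 := sub_ne_zero.mpr (fun h => hR h.symm)
  have haR' : a + R ≠ 0 := by positivity
  refine ⟨(1 + R/a) • c, (1 - R/a) • c, ?_, ?_, ?_⟩
  · have h1 : (1 + R/a) • c - c = (R/a) • c := by module
    rw [h1, norm_smul, Real.norm_eq_abs, abs_of_pos (div_pos hRpos ha0), ← ha,
      div_mul_cancel₀ _ ha0.ne']
  · have h1 : (1 - R/a) • c - c = (-(R/a)) • c := by module
    rw [h1, norm_smul, Real.norm_eq_abs, abs_neg, abs_of_pos (div_pos hRpos ha0), ← ha,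
      div_mul_cancel₀ _ ha0.ne']
  · have hx : c - (1 + R/a) • c = (-(R/a)) • c := by module
    have hy : c - (1 - R/a) • c = (R/a) • c := by module
    have hcc : ⟪c, c⟫ = a ^ 2 := by
      rw [real_inner_self_eq_norm_sq, ha]
    have hnx : ‖(1 + R/a) • c‖ = a + R := by
      rw [norm_smul, Real.norm_eq_abs, ← ha]
      rw [abs_of_pos (by positivity)]
      field_simp
    have hny : ‖(1 - R/a) • c‖ ^ 2 = (a - R) ^ 2 := by
      rw [norm_smul, Real.norm_eq_abs, ← ha, mul_pow, sq_abs]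
      field_simp
    rw [hx, hy, real_inner_smul_left, real_inner_smul_right, real_inner_smul_left,
      real_inner_smul_right, hcc, hnx, hny]
    have hix : (1 + R/a) * (-(R/a) * a ^ 2) = -(R * (a + R)) := by field_simp
    have hiy : (1 - R/a) * (R/a * a ^ 2) = R * (a - R) := by field_simp
    rw [hix, hiy]
    intro h
    field_simp at h
    have key : p * R ^ 2 * (a + R) * (a - R) * (2 * a) = 0 := by linear_combination R * (a + R) * (a - R) * h
    exact (mul_ne_zero (mul_ne_zero (mul_ne_zero (mul_ne_zero hp.ne'
      (by positivity)) haR') haR) (by positivity)) key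
end

section
/- Let p > 0 and V > 0. For all real numbers a < b with ∫_a^b |x|^p dx = V, the weighted perimeter satisfies |a|^p + |b|^p ≥ ((p+1)V)^{p/(p+1)}, with equality when a = 0 and b = ((p+1)V)^{1/(p+1)}. In particular, the interval with one endpoint at the origin minimizes weighted perimeter among all intervals of given weighted length. -/
lemma sb_cont (p : ℝ) (hp : 0 < p) : Continuous (fun x : ℝ => |x| ^ p) :=
  continuous_abs.rpow_const (fun _ => Or.inr hp.le)

lemma sb_int0 (p : ℝ) (hp : 0 < p) (c : ℝ) (hc : 0 ≤ c) :
    (∫ x in (0:ℝ)..c, |x| ^ p) = c ^ (p + 1) / (p + 1) := by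
  have h1 : (∫ x in (0:ℝ)..c, |x| ^ p) = ∫ x in (0:ℝ)..c, x ^ p := by
    apply intervalIntegral.integral_congr
    intro x hx
    rw [Set.uIcc_of_le hc] at hx
    simp [abs_of_nonneg hx.1]
  rw [h1, integral_rpow (Or.inl (by linarith))]
  rw [Real.zero_rpow (by linarith)]
  ring

lemma sb_intJ (p : ℝ) (hp : 0 < p) (a : ℝ) :
    (∫ x in (0:ℝ)..a, |x| ^ p) = a * |a| ^ p / (p + 1) := by
  rcases le_or_gt 0 a with ha | ha
  · rw [sb_int0 p hp a ha, abs_of_nonneg ha,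
      Real.rpow_add' ha (by positivity : p + 1 ≠ 0), Real.rpow_one]
    ring
  · rw [intervalIntegral.integral_symm]
    have h2 : (∫ x in a..(0:ℝ), |x| ^ p) = ∫ x in a..(0:ℝ), |(-x)| ^ p := by
      simp
    rw [h2, intervalIntegral.integral_comp_neg (fun x => |x| ^ p), neg_zero,
      sb_int0 p hp (-a) (by linarith), abs_of_neg ha,
      Real.rpow_add' (by linarith : (0:ℝ) ≤ -a) (by positivity : p + 1 ≠ 0), Real.rpow_one]
    ring

lemma sb_integral (p : ℝ) (hp : 0 < p) (a b : ℝ) :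
    (∫ x in a..b, |x| ^ p) = (b * |b| ^ p - a * |a| ^ p) / (p + 1) := by
  have hi : ∀ u v : ℝ, IntervalIntegrable (fun x : ℝ => |x| ^ p) MeasureTheory.volume u v :=
    fun u v => (sb_cont p hp).intervalIntegrable u v
  have := intervalIntegral.integral_add_adjacent_intervals (hi a 0) (hi 0 b)
  have h0 : (∫ x in a..(0:ℝ), |x| ^ p) = -(a * |a| ^ p / (p + 1)) := by
    rw [intervalIntegral.integral_symm, sb_intJ p hp a]
  rw [h0, sb_intJ p hp b] at this
  rw [← this]; ring

/-- In ℝ¹ with density |x|^p, among intervals [a,b] of given weighted length V the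
    weighted perimeter |a|^p + |b|^p is at least ((p+1)V)^(p/(p+1)), with equality
    for the interval with one endpoint at the origin: a = 0,
    b = ((p+1)V)^(1/(p+1)). -/
theorem single_bubble_one_dim (p V : ℝ) (hp : 0 < p) (hV : 0 < V) :
    (∀ a b : ℝ, a < b → (∫ x in a..b, |x| ^ p) = V →
      ((p + 1) * V) ^ (p / (p + 1)) ≤ |a| ^ p + |b| ^ p) ∧
    (∫ x in (0:ℝ)..(((p + 1) * V) ^ ((1:ℝ) / (p + 1))), |x| ^ p) = V ∧
    |(0:ℝ)| ^ p + |((p + 1) * V) ^ ((1:ℝ) / (p + 1))| ^ p =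
      ((p + 1) * V) ^ (p / (p + 1)) := by
  have hp1 : (0:ℝ) < p + 1 := by linarith
  have hPV : (0:ℝ) < (p + 1) * V := by positivity
  refine ⟨?_, ?_, ?_⟩
  · intro a b _ hint
    rw [sb_integral p hp a b] at hint
    set A := |a| with hA
    set B := |b| with hB
    have hA0 : 0 ≤ A := abs_nonneg a
    have hB0 : 0 ≤ B := abs_nonneg b
    set S := A ^ p + B ^ p with hS
    have hS0 : 0 ≤ S := by positivity
    -- (p+1)V ≤ A^p * A + B^p * B
    have h1 : (p + 1) * V ≤ A ^ p * A + B ^ p * B := by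
      have : (p + 1) * V = b * B ^ p - a * A ^ p := by
        rw [← hint]; field_simp
      rw [this]
      have hBp : (0:ℝ) ≤ B ^ p := Real.rpow_nonneg hB0 p
      have hAp : (0:ℝ) ≤ A ^ p := Real.rpow_nonneg hA0 p
      have h2 : b * B ^ p ≤ B * B ^ p :=
        mul_le_mul_of_nonneg_right (le_abs_self b) hBp
      have h3 : -a * A ^ p ≤ A * A ^ p :=
        mul_le_mul_of_nonneg_right (neg_le_abs a) hAp
      nlinarith
    -- A ≤ S^(1/p), B ≤ S^(1/p)
    have hSp : ∀ C : ℝ, 0 ≤ C → C ^ p ≤ S → C ≤ S ^ (1/p) := by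
      intro C hC hCS
      calc C = (C ^ p) ^ (1/p) := by
              rw [← Real.rpow_mul hC, mul_one_div, div_self hp.ne', Real.rpow_one]
            _ ≤ S ^ (1/p) := Real.rpow_le_rpow (by positivity) hCS (by positivity)
    have hAS : A ≤ S ^ (1/p) := hSp A hA0 (by rw [hS]; nlinarith [Real.rpow_nonneg hB0 p])
    have hBS : B ≤ S ^ (1/p) := hSp B hB0 (by rw [hS]; nlinarith [Real.rpow_nonneg hA0 p])
    have h4 : (p + 1) * V ≤ S ^ ((p+1)/p) := by
      have h5 : A ^ p * A + B ^ p * B ≤ S * S ^ (1/p) := by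
        have e1 := mul_le_mul_of_nonneg_left hAS (Real.rpow_nonneg hA0 p)
        have e2 := mul_le_mul_of_nonneg_left hBS (Real.rpow_nonneg hB0 p)
        calc A ^ p * A + B ^ p * B ≤ A ^ p * S ^ (1/p) + B ^ p * S ^ (1/p) :=
              add_le_add e1 e2
          _ = S * S ^ (1/p) := by rw [hS]; ring
      have h6 : S * S ^ (1/p) = S ^ ((p+1)/p) := by
        rw [show (p+1)/p = 1 + 1/p by field_simp,
          Real.rpow_add' hS0 (by positivity), Real.rpow_one]
      linarith [h5, h6.symm.le]
    calc ((p + 1) * V) ^ (p / (p + 1))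
        ≤ (S ^ ((p+1)/p)) ^ (p / (p + 1)) :=
          Real.rpow_le_rpow hPV.le h4 (by positivity)
      _ = S := by
          rw [← Real.rpow_mul hS0]
          rw [show (p+1)/p * (p/(p+1)) = 1 by field_simp, Real.rpow_one]
  · have hc : (0:ℝ) ≤ ((p + 1) * V) ^ ((1:ℝ) / (p + 1)) := Real.rpow_nonneg hPV.le _
    rw [sb_int0 p hp _ hc, ← Real.rpow_mul hPV.le,
      show (1:ℝ) / (p+1) * (p+1) = 1 by field_simp, Real.rpow_one]
    field_simp
  · have hc : (0:ℝ) ≤ ((p + 1) * V) ^ ((1:ℝ) / (p + 1)) := Real.rpow_nonneg hPV.le _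
    rw [abs_of_nonneg hc, abs_zero, Real.zero_rpow hp.ne', zero_add,
      ← Real.rpow_mul hPV.le]
    congr 1
    field_simp
end

section
/- Let p > 0 and V₁, V₂ > 0. For all real numbers a₁ < a₂ < a₃ with ∫_{a₁}^{a₂} |x|^p dx = V₁ and ∫_{a₂}^{a₃} |x|^p dx = V₂, the weighted perimeter satisfies |a₁|^p + |a₂|^p + |a₃|^p ≥ ((p+1)V₁)^{p/(p+1)} + ((p+1)V₂)^{p/(p+1)}, with equality for the pair of adjacent intervals meeting at the origin, i.e., a₂ = 0, a₁ = −((p+1)V₁)^{1/(p+1)}, a₃ = ((p+1)V₂)^{1/(p+1)}. -/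
/-!
`ψ = signedRpow p`, `ψ x = x * |x| ^ p`, is an antiderivative of `(p + 1) * |x| ^ p`, so the
weighted length of `[a, b]` is `(ψ b - ψ a) / (p + 1)`; moreover
`|ψ x| ^ (p / (p + 1)) = |x| ^ p`.
As `ψ` is monotone and `t ↦ t ^ (p / (p + 1))` is subadditive, `((p + 1) V) ^ (p / (p + 1))` is
at most the sum of the densities at the two endpoints of an interval of weighted length `V`, and
at most the density at the endpoint farther from the origin when the interval lies on one side
of it. Whichever side of the origin `a₂` lies on, one of the two intervals is of the second kind.
-/

open Real

noncomputable def signedRpow (p x : ℝ) : ℝ := x * |x| ^ p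

section SignedRpow

variable {p : ℝ}

@[simp]
lemma signedRpow_zero (p : ℝ) : signedRpow p 0 = 0 := zero_mul _

@[simp]
lemma signedRpow_neg (p x : ℝ) : signedRpow p (-x) = -signedRpow p x := by
  simp [signedRpow]

lemma signedRpow_of_pos {x : ℝ} (hx : 0 < x) : signedRpow p x = x ^ (p + 1) := by
  rw [signedRpow, abs_of_pos hx, rpow_add_one hx.ne', mul_comm]

lemma abs_signedRpow (hp : 0 ≤ p) (x : ℝ) : |signedRpow p x| = |x| ^ (p + 1) := by
  rw [signedRpow, abs_mul, abs_of_nonneg (rpow_nonneg (abs_nonneg x) p),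
    rpow_add_one' (abs_nonneg x) (by linarith), mul_comm]

lemma abs_signedRpow_rpow_div_add_one (hp : 0 ≤ p) (x : ℝ) :
    |signedRpow p x| ^ (p / (p + 1)) = |x| ^ p := by
  rw [abs_signedRpow hp, ← rpow_mul (abs_nonneg x), mul_div_cancel₀ _ (by positivity)]

lemma signedRpow_rpow_one_div_add_one (hp : 0 ≤ p) {W : ℝ} (hW : 0 < W) :
    signedRpow p (W ^ (1 / (p + 1))) = W := by
  rw [signedRpow_of_pos (rpow_pos_of_pos hW _), ← rpow_mul hW.le,
    one_div_mul_cancel (by positivity), rpow_one]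

lemma continuous_signedRpow (hp : 0 ≤ p) : Continuous (signedRpow p) :=
  continuous_id.mul (continuous_abs.rpow_const fun _ => Or.inr hp)

lemma hasDerivAt_signedRpow_of_pos {x : ℝ} (hx : 0 < x) :
    HasDerivAt (signedRpow p) ((p + 1) * |x| ^ p) x := by
  have h := hasDerivAt_rpow_const (p := p + 1) (Or.inl hx.ne')
  rw [add_sub_cancel_right] at h
  refine h.congr_of_eventuallyEq ?_ |>.congr_deriv (by rw [abs_of_pos hx])
  filter_upwards [eventually_gt_nhds hx] with y hy using signedRpow_of_pos hy

/-- At the origin, where `|x| ^ p` need not be differentiable, the derivative comes from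
continuity of `signedRpow p` and of the derivative elsewhere. -/
theorem hasDerivAt_signedRpow (hp : 0 ≤ p) (x : ℝ) :
    HasDerivAt (signedRpow p) ((p + 1) * |x| ^ p) x := by
  have hne : ∀ y ≠ (0 : ℝ), HasDerivAt (signedRpow p) ((p + 1) * |y| ^ p) y := by
    intro y hy
    rcases hy.lt_or_gt with hy | hy
    · have h := (hasDerivAt_signedRpow_of_pos (p := p) (neg_pos.2 hy)).comp y (hasDerivAt_neg y)
      refine (h.neg.congr_deriv (by simp)).congr_of_eventuallyEq (.of_forall fun z => ?_)
      simp [Function.comp_def]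
    · exact hasDerivAt_signedRpow_of_pos hy
  rcases eq_or_ne x 0 with rfl | hx
  · exact hasDerivAt_of_hasDerivAt_of_ne hne (continuous_signedRpow hp).continuousAt
      ((continuous_abs.rpow_const fun _ => Or.inr hp).const_mul _).continuousAt
  · exact hne x hx

lemma monotone_signedRpow (hp : 0 ≤ p) : Monotone (signedRpow p) :=
  monotone_of_deriv_nonneg (fun x => (hasDerivAt_signedRpow hp x).differentiableAt)
    fun x => (hasDerivAt_signedRpow hp x).deriv ▸ by positivity

theorem integral_abs_rpow (hp : 0 ≤ p) (a b : ℝ) :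
    ∫ x in a..b, |x| ^ p = (signedRpow p b - signedRpow p a) / (p + 1) := by
  rw [eq_div_iff (by positivity), mul_comm, ← intervalIntegral.integral_const_mul]
  exact intervalIntegral.integral_eq_sub_of_hasDerivAt (fun x _ => hasDerivAt_signedRpow hp x)
    (((continuous_abs.rpow_const fun _ => Or.inr hp).const_mul _).intervalIntegrable a b)

lemma signedRpow_sub_rpow_le (hp : 0 ≤ p) {a b : ℝ} (hab : a ≤ b) :
    (signedRpow p b - signedRpow p a) ^ (p / (p + 1)) ≤ |a| ^ p + |b| ^ p := by
  have hq : p / (p + 1) ≤ 1 := div_le_one_of_le₀ (by linarith) (by positivity)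
  calc (signedRpow p b - signedRpow p a) ^ (p / (p + 1))
      ≤ (|signedRpow p a| + |signedRpow p b|) ^ (p / (p + 1)) := by
        gcongr
        · exact sub_nonneg.2 (monotone_signedRpow hp hab)
        · linarith [neg_abs_le (signedRpow p a), le_abs_self (signedRpow p b)]
    _ ≤ |signedRpow p a| ^ (p / (p + 1)) + |signedRpow p b| ^ (p / (p + 1)) :=
        rpow_add_le_add_rpow (abs_nonneg _) (abs_nonneg _) (by positivity) hq
    _ = |a| ^ p + |b| ^ p := by
        rw [abs_signedRpow_rpow_div_add_one hp, abs_signedRpow_rpow_div_add_one hp]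

lemma signedRpow_sub_rpow_le_of_nonneg (hp : 0 ≤ p) {a b : ℝ} (ha : 0 ≤ a) (hab : a ≤ b) :
    (signedRpow p b - signedRpow p a) ^ (p / (p + 1)) ≤ |b| ^ p := by
  rw [← abs_signedRpow_rpow_div_add_one hp b]
  have ha' : 0 ≤ signedRpow p a := signedRpow_zero p ▸ monotone_signedRpow hp ha
  gcongr
  · exact sub_nonneg.2 (monotone_signedRpow hp hab)
  · linarith [le_abs_self (signedRpow p b)]

lemma signedRpow_sub_rpow_le_of_nonpos (hp : 0 ≤ p) {a b : ℝ} (hb : b ≤ 0) (hab : a ≤ b) :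
    (signedRpow p b - signedRpow p a) ^ (p / (p + 1)) ≤ |a| ^ p := by
  simpa [neg_add_eq_sub] using
    signedRpow_sub_rpow_le_of_nonneg hp (neg_nonneg.2 hb) (neg_le_neg hab)

end SignedRpow

/-- In ℝ¹ with density |x|^p, among double bubbles of adjacent intervals
    [a₁,a₂], [a₂,a₃] of given weighted lengths V₁, V₂, the weighted perimeter
    |a₁|^p + |a₂|^p + |a₃|^p is at least
    ((p+1)V₁)^(p/(p+1)) + ((p+1)V₂)^(p/(p+1)), with equality for the pair of
    adjacent intervals meeting at the origin. -/
theorem double_bubble_one_dim (p V₁ V₂ : ℝ) (hp : 0 < p) (hV₁ : 0 < V₁)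
    (hV₂ : 0 < V₂) :
    (∀ a₁ a₂ a₃ : ℝ, a₁ < a₂ → a₂ < a₃ →
      (∫ x in a₁..a₂, |x| ^ p) = V₁ → (∫ x in a₂..a₃, |x| ^ p) = V₂ →
      ((p + 1) * V₁) ^ (p / (p + 1)) + ((p + 1) * V₂) ^ (p / (p + 1)) ≤
        |a₁| ^ p + |a₂| ^ p + |a₃| ^ p) ∧
    (∫ x in (-(((p + 1) * V₁) ^ ((1:ℝ) / (p + 1))))..(0:ℝ), |x| ^ p) = V₁ ∧
    (∫ x in (0:ℝ)..(((p + 1) * V₂) ^ ((1:ℝ) / (p + 1))), |x| ^ p) = V₂ ∧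
    |(-(((p + 1) * V₁) ^ ((1:ℝ) / (p + 1))))| ^ p + |(0:ℝ)| ^ p +
        |((p + 1) * V₂) ^ ((1:ℝ) / (p + 1))| ^ p =
      ((p + 1) * V₁) ^ (p / (p + 1)) + ((p + 1) * V₂) ^ (p / (p + 1)) := by
  have hp1 : p + 1 ≠ 0 := by positivity
  have hW₁ : 0 < (p + 1) * V₁ := by positivity
  have hW₂ : 0 < (p + 1) * V₂ := by positivity
  have hlength (a b : ℝ) :
      (p + 1) * ∫ x in a..b, |x| ^ p = signedRpow p b - signedRpow p a := by
    rw [integral_abs_rpow hp.le, mul_div_cancel₀ _ hp1]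
  have hdensity {W : ℝ} (hW : 0 < W) : |W ^ (1 / (p + 1))| ^ p = W ^ (p / (p + 1)) := by
    rw [abs_of_pos (rpow_pos_of_pos hW _), ← rpow_mul hW.le, one_div_mul_eq_div]
  refine ⟨fun a₁ a₂ a₃ h₁₂ h₂₃ hV₁' hV₂' => ?_, ?_, ?_, ?_⟩
  · rw [← hV₁', ← hV₂', hlength, hlength]
    rcases le_total 0 a₂ with h₂ | h₂
    · linarith [signedRpow_sub_rpow_le hp.le h₁₂.le,
        signedRpow_sub_rpow_le_of_nonneg hp.le h₂ h₂₃.le]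
    · linarith [signedRpow_sub_rpow_le_of_nonpos hp.le h₂ h₁₂.le,
        signedRpow_sub_rpow_le hp.le h₂₃.le]
  · rw [integral_abs_rpow hp.le, signedRpow_zero, signedRpow_neg,
      signedRpow_rpow_one_div_add_one hp.le hW₁, zero_sub, neg_neg, mul_div_cancel_left₀ _ hp1]
  · rw [integral_abs_rpow hp.le, signedRpow_zero, signedRpow_rpow_one_div_add_one hp.le hW₂,
      sub_zero, mul_div_cancel_left₀ _ hp1]
  · rw [abs_neg, hdensity hW₁, hdensity hW₂, abs_zero, zero_rpow hp.ne', add_zero]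
end
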